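/- Suppose the polyhedron P with the given face-pairing satisfies the Tessellation Condition. Then the family {g·W_{x,δ} : g ∈ G, x ∈ P, 0 < δ ≤ δ(x)} is a base of the topology on J. -/

import Mathlib

open Metric Set

section
variable {M : Type*} [MetricSpace M] {ι : Type*}

/-- The group generated by the face-pairing isometries. -/
def pairGroup (I : ι → M ≃ᵢ M) : Subgroup (M ≃ᵢ M) :=
  Subgroup.closure (Set.range I)

/-- `G` carries the discrete topology. -/
instance pairGroup.topologicalSpace (I : ι → M ≃ᵢ M) : TopologicalSpace (pairGroup I) := ⊥

instance pairGroup.discreteTopology (I : ι → M ≃ᵢ M) : DiscreteTopology (pairGroup I) := ⟨rfl⟩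

/-- The basic relation on `G × P` generating the gluing equivalence. -/
def pairRel (P : Set M) (face : ι → Set M) (I : ι → M ≃ᵢ M) :
    pairGroup I × P → pairGroup I × P → Prop := fun p q =>
  ∃ s : ι, (p.2 : M) ∈ face s ∧ I s (p.2 : M) = (q.2 : M) ∧
    ((q.1 : M ≃ᵢ M))⁻¹ * (p.1 : M ≃ᵢ M) = I s

/-- The natural map `φ : J → M`, `φ [g, x] = g x`. -/
def pairPhi (P : Set M) (face : ι → Set M) (I : ι → M ≃ᵢ M) :
    Quot (pairRel P face I) → M :=
  Quot.lift (fun p => (p.1 : M ≃ᵢ M) (p.2 : M)) (by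
    rintro ⟨g, x⟩ ⟨h, y⟩ ⟨s, -, hIx, hgh⟩
    have hg : (g : M ≃ᵢ M) = (h : M ≃ᵢ M) * I s := by
      rw [← hgh, mul_inv_cancel_left]
    simp only [hg]
    simp [hIx])

/-- The fibre `π⁻¹ [1, x]`. -/
def fiberAt (P : Set M) (face : ι → Set M) (I : ι → M ≃ᵢ M) (x : P) :
    Set (pairGroup I × P) :=
  {p | Quot.mk (pairRel P face I) p = Quot.mk (pairRel P face I) (1, x)}

/-- The set `N_{x,δ} ⊆ G × P`. -/
def pairN (P : Set M) (face : ι → Set M) (I : ι → M ≃ᵢ M) (x : P) (δ : ℝ) :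
    Set (pairGroup I × P) :=
  {q | ∃ p ∈ fiberAt P face I x, q.1 = p.1 ∧ dist (q.2 : M) (p.2 : M) < δ}

/-- The set `W_{x,δ} = π (N_{x,δ}) ⊆ J`. -/
def pairW (P : Set M) (face : ι → Set M) (I : ι → M ≃ᵢ M) (x : P) (δ : ℝ) :
    Set (Quot (pairRel P face I)) :=
  Quot.mk (pairRel P face I) '' pairN P face I x δ

/-- The action of `h ∈ G` on `J`, `h • [g, x] = [h g, x]`. -/
def Jmul (P : Set M) (face : ι → Set M) (I : ι → M ≃ᵢ M) (h : pairGroup I) :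
    Quot (pairRel P face I) → Quot (pairRel P face I) :=
  Quot.map (fun p => (h * p.1, p.2)) (by
    rintro ⟨g, x⟩ ⟨g', y⟩ ⟨s, hx, hIx, hgg⟩
    exact ⟨s, hx, hIx, by rw [← hgg]; simp [mul_assoc]⟩)

/-- `[P] = {[1, x] : x ∈ P} ⊆ J`. -/
def PJ (P : Set M) (face : ι → Set M) (I : ι → M ≃ᵢ M) :
    Set (Quot (pairRel P face I)) :=
  Set.range fun x : P => Quot.mk (pairRel P face I) (1, x)

/-- `[P°] = {[1, x] : x ∈ P°} ⊆ J`. -/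
def PJint (P : Set M) (face : ι → Set M) (I : ι → M ≃ᵢ M) :
    Set (Quot (pairRel P face I)) :=
  {j | ∃ x : P, (x : M) ∈ interior P ∧ j = Quot.mk (pairRel P face I) (1, x)}

/-- `P` is a polyhedron with a face-pairing. -/
structure IsPolyhedron (P : Set M) (face : ι → Set M) (bar : ι → ι) (I : ι → M ≃ᵢ M) :
    Prop where
  closed : IsClosed P
  locPathConn : LocPathConnectedSpace P
  connected : IsConnected P
  int_nonempty : (interior P).Nonempty
  cl_int : P = closure (interior P)
  bdry_nonempty : (P \ interior P).Nonempty
  face_nonempty : ∀ s, (face s).Nonempty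
  face_union : (⋃ s, face s) = P \ interior P
  bar_invol : ∀ s, bar (bar s) = s
  I_face : ∀ s, I s '' face s = face (bar s)
  I_bar : ∀ s, I (bar s) = (I s)⁻¹

/-- The Tessellation Condition 2.1. -/
structure TessellationCondition (P : Set M) (face : ι → Set M) (I : ι → M ≃ᵢ M) :
    Prop where
  local_cond : ∀ x : P, ∃ δ₀ > 0, ∀ δ : ℝ, 0 < δ → δ ≤ δ₀ →
    Quot.mk (pairRel P face I) ⁻¹' pairW P face I x δ = pairN P face I x δ ∧
    pairPhi P face I '' pairW P face I x δ = ball (x : M) δ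
  global_cond : ∃ (N : Set M) (ε : ℝ) (f : P → ℝ), IsOpen N ∧ 0 < ε ∧
    thickening ε P ⊆ N ∧ (∀ x, 0 < f x) ∧
    Set.BijOn (pairPhi P face I) (⋃ x : P, pairW P face I x (f x)) N

end


section auxlemmas
variable {M : Type*} [MetricSpace M] {ι : Type*}
  (P : Set M) (face : ι → Set M) (I : ι → M ≃ᵢ M)

lemma jmul_mk (g h : pairGroup I) (x : P) :
    Jmul P face I g (Quot.mk _ (h, x)) = Quot.mk _ (g * h, x) := rfl

lemma jmul_jmul (g h : pairGroup I) (j : Quot (pairRel P face I)) :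
    Jmul P face I g (Jmul P face I h j) = Jmul P face I (g * h) j := by
  induction j using Quot.ind with
  | _ p => show Quot.mk _ (g * (h * p.1), p.2) = Quot.mk _ (g * h * p.1, p.2)
           rw [mul_assoc]

lemma jmul_one (j : Quot (pairRel P face I)) : Jmul P face I 1 j = j := by
  induction j using Quot.ind with
  | _ p => show Quot.mk _ (1 * p.1, p.2) = Quot.mk _ (p.1, p.2)
           rw [one_mul]

lemma continuous_jmul (g : pairGroup I) : Continuous (Jmul P face I g) := by
  rw [isQuotientMap_quot_mk.continuous_iff]
  exact continuous_quot_mk.comp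
    (((continuous_of_discreteTopology (f := fun h : pairGroup I => g * h)).comp
      continuous_fst).prodMk continuous_snd)

lemma jmul_image_eq (g : pairGroup I) (W : Set (Quot (pairRel P face I))) :
    Jmul P face I g '' W = Jmul P face I g⁻¹ ⁻¹' W := by
  ext j
  constructor
  · rintro ⟨k, hk, rfl⟩
    show Jmul P face I g⁻¹ (Jmul P face I g k) ∈ W
    rw [jmul_jmul, inv_mul_cancel, jmul_one]; exact hk
  · intro hj
    exact ⟨Jmul P face I g⁻¹ j, hj, by rw [jmul_jmul, mul_inv_cancel, jmul_one]⟩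

lemma isOpen_pairN (x : P) (δ : ℝ) : IsOpen (pairN P face I x δ) := by
  have h : pairN P face I x δ = ⋃ p ∈ fiberAt P face I x,
      (Prod.fst ⁻¹' {p.1} ∩
        {q : pairGroup I × P | dist (q.2 : M) (p.2 : M) < δ}) := by
    ext q
    simp only [pairN, Set.mem_setOf_eq, Set.mem_iUnion, Set.mem_inter_iff,
      Set.mem_preimage, Set.mem_singleton_iff]
    tauto
  rw [h]
  refine isOpen_biUnion fun p _ =>
    (IsOpen.preimage continuous_fst (isOpen_discrete _)).inter ?_
  exact isOpen_lt (Continuous.dist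
    (continuous_subtype_val.comp continuous_snd) continuous_const) continuous_const

end auxlemmas

/-- Suppose the polyhedron `P` with the given face-pairing satisfies the
Tessellation Condition, with `δ₀ : P → ℝ` a choice of the radii `δ(x)` from the
first part of the condition.  Then the family
`{g • W_{x,δ} : g ∈ G, x ∈ P, 0 < δ ≤ δ₀ x}` is a base of the topology on `J`. -/
theorem pairW_isTopologicalBasis {M : Type*} [MetricSpace M] {ι : Type*}
    (P : Set M) (face : ι → Set M) (bar : ι → ι) (I : ι → M ≃ᵢ M)
    (hpoly : IsPolyhedron P face bar I)
    (hfin : ∀ x : P, (fiberAt P face I x).Finite)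
    (htess : TessellationCondition P face I)
    (δ₀ : P → ℝ)
    (hδ₀ : ∀ x : P, 0 < δ₀ x ∧ ∀ δ : ℝ, 0 < δ → δ ≤ δ₀ x →
      Quot.mk (pairRel P face I) ⁻¹' pairW P face I x δ = pairN P face I x δ ∧
      pairPhi P face I '' pairW P face I x δ = ball (x : M) δ) :
    TopologicalSpace.IsTopologicalBasis
      {U : Set (Quot (pairRel P face I)) | ∃ (g : pairGroup I) (x : P) (δ : ℝ),
        0 < δ ∧ δ ≤ δ₀ x ∧ U = Jmul P face I g '' pairW P face I x δ} := by
  apply TopologicalSpace.isTopologicalBasis_of_isOpen_of_nhds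
  · rintro U ⟨g, x, δ, hδpos, hδle, rfl⟩
    have hW : IsOpen (pairW P face I x δ) := by
      rw [← isQuotientMap_quot_mk.isOpen_preimage, ((hδ₀ x).2 δ hδpos hδle).1]
      exact isOpen_pairN P face I x δ
    rw [jmul_image_eq]
    exact hW.preimage (continuous_jmul P face I g⁻¹)
  · intro a u ha hu
    obtain ⟨⟨g, x⟩, rfl⟩ := Quot.exists_rep a
    set V := Jmul P face I g ⁻¹' u with hV
    have hVopen : IsOpen V := hu.preimage (continuous_jmul P face I g)
    have hmem : Quot.mk (pairRel P face I) ((1 : pairGroup I), x) ∈ V := by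
      show Jmul P face I g (Quot.mk _ (1, x)) ∈ u
      rw [jmul_mk, mul_one]; exact ha
    have hO : IsOpen (Quot.mk (pairRel P face I) ⁻¹' V) :=
      hVopen.preimage continuous_quot_mk
    have hfib : ∀ p ∈ fiberAt P face I x, p ∈ Quot.mk (pairRel P face I) ⁻¹' V := by
      intro p hp
      show Quot.mk (pairRel P face I) p ∈ V
      rw [hp]; exact hmem
    have key : ∀ p ∈ fiberAt P face I x, ∃ δp > 0, ∀ q : pairGroup I × P,
        q.1 = p.1 → dist (q.2 : M) (p.2 : M) < δp →
        q ∈ Quot.mk (pairRel P face I) ⁻¹' V := by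
      intro p hp
      obtain ⟨u1, v1, hu1, hv1, hp1, hp2, hsub⟩ :=
        isOpen_prod_iff.mp hO p.1 p.2 (by simpa using hfib p hp)
      obtain ⟨δp, hδp, hball⟩ := Metric.isOpen_iff.mp hv1 p.2 hp2
      refine ⟨δp, hδp, fun q hq1 hq2 => hsub (Set.mem_prod.mpr ⟨hq1 ▸ hp1, ?_⟩)⟩
      exact hball (Metric.mem_ball.mpr (by rw [Subtype.dist_eq]; exact hq2))
    choose! δp hδppos hδp using key
    have hone : (1, x) ∈ fiberAt P face I x := rfl
    have hne : ((hfin x).toFinset).Nonempty :=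
      ⟨(1, x), (hfin x).mem_toFinset.mpr hone⟩
    set δ1 := ((hfin x).toFinset).inf' hne δp with hδ1
    set δ := min (δ₀ x) δ1 with hδ
    have hδpos : 0 < δ := lt_min (hδ₀ x).1 ((Finset.lt_inf'_iff hne).mpr
      fun p hp => hδppos p ((hfin x).mem_toFinset.mp hp))
    refine ⟨Jmul P face I g '' pairW P face I x δ,
      ⟨g, x, δ, hδpos, min_le_left _ _, rfl⟩, ?_, ?_⟩
    · refine ⟨Quot.mk _ (1, x), ⟨(1, x), ⟨(1, x), hone, rfl, ?_⟩, rfl⟩, ?_⟩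
      · simpa using hδpos
      · rw [jmul_mk, mul_one]
    · rintro j ⟨k, ⟨q, ⟨p, hp, hq1, hq2⟩, rfl⟩, rfl⟩
      have hq2' : dist (q.2 : M) (p.2 : M) < δp p :=
        hq2.trans_le ((min_le_right _ _).trans
          (Finset.inf'_le _ ((hfin x).mem_toFinset.mpr hp)))
      exact hδp p hp q hq1 hq2'
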